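/- Let ρ₊, ρ₋ > 0 and let h₊, h₋, w ∈ ℝ³ be such that h₊ × h₋ ≠ 0 and w lies in the span of h₊ and h₋. Assume the strict Syrovatskij condition (ρ₊ + ρ₋)·‖h₊ × h₋‖² > ρ₊·‖h₊ × w‖² + ρ₋·‖h₋ × w‖². Then ρ₊·‖h₊‖² + ρ₋·‖h₋‖² > (ρ₊·ρ₋/(ρ₊+ρ₋))·‖w‖². -/

import Mathlib

/-!
Write `w = α • h₊ + β • h₋`. Then `h₊ × w = β (h₊ × h₋)` and `h₋ × w = -α (h₊ × h₋)`, so the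
Syrovatskij condition says exactly `ρ₋ α² + ρ₊ β² < ρ₊ + ρ₋`. On the other hand the triangle
inequality and a weighted Cauchy–Schwarz inequality give
`ρ₊ ρ₋ ‖w‖² ≤ (ρ₋ α² + ρ₊ β²) (ρ₊ ‖h₊‖² + ρ₋ ‖h₋‖²)`, and the last factor is positive since `h₊ × h₋ ≠ 0`
forces `h₊ ≠ 0`.
-/

/-- Cross product on `EuclideanSpace ℝ (Fin 3)`. -/
noncomputable def cross3 (a b : EuclideanSpace ℝ (Fin 3)) : EuclideanSpace ℝ (Fin 3) :=
  (WithLp.equiv 2 (Fin 3 → ℝ)).symm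
    (crossProduct ((WithLp.equiv 2 (Fin 3 → ℝ)) a) ((WithLp.equiv 2 (Fin 3 → ℝ)) b))

section cross3

variable (a b : EuclideanSpace ℝ (Fin 3))

@[simp] lemma cross3_self : cross3 a a = 0 := by
  simp [cross3]

lemma cross3_anticomm : cross3 b a = -cross3 a b := by
  simp only [cross3, WithLp.equiv_apply, WithLp.equiv_symm_apply, ← WithLp.toLp_neg, cross_anticomm]

@[simp] lemma zero_cross3 : cross3 0 b = 0 := by
  simp [cross3]

lemma cross3_smul_add_smul (c : EuclideanSpace ℝ (Fin 3)) (α β : ℝ) :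
    cross3 a (α • b + β • c) = α • cross3 a b + β • cross3 a c := by
  simp [cross3]

lemma norm_cross3_left_smul_add_smul (α β : ℝ) :
    ‖cross3 a (α • a + β • b)‖ = |β| * ‖cross3 a b‖ := by
  simp [cross3_smul_add_smul, norm_smul]

lemma norm_cross3_right_smul_add_smul (α β : ℝ) :
    ‖cross3 b (α • a + β • b)‖ = |α| * ‖cross3 a b‖ := by
  simp [cross3_smul_add_smul, norm_smul, cross3_anticomm b a]

end cross3

lemma mul_add_mul_sq_le (p q s t c d : ℝ) :
    p * q * (s * c + t * d) ^ 2 ≤ (q * s ^ 2 + p * t ^ 2) * (p * c ^ 2 + q * d ^ 2) := by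
  nlinarith [sq_nonneg (q * s * d - p * t * c)]

lemma mul_norm_smul_add_smul_sq_le {E : Type*} [SeminormedAddCommGroup E] [NormedSpace ℝ E]
    {p q : ℝ} (hp : 0 ≤ p) (hq : 0 ≤ q) (x y : E) (α β : ℝ) :
    p * q * ‖α • x + β • y‖ ^ 2 ≤ (q * α ^ 2 + p * β ^ 2) * (p * ‖x‖ ^ 2 + q * ‖y‖ ^ 2) := by
  calc p * q * ‖α • x + β • y‖ ^ 2 ≤ p * q * (|α| * ‖x‖ + |β| * ‖y‖) ^ 2 := by
        gcongr
        exact (norm_add_le _ _).trans_eq (by simp [norm_smul])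
    _ ≤ (q * |α| ^ 2 + p * |β| ^ 2) * (p * ‖x‖ ^ 2 + q * ‖y‖ ^ 2) := mul_add_mul_sq_le ..
    _ = _ := by simp only [sq_abs]

/-- The strict (second) Syrovatskij condition implies the first Syrovatskij condition:
`ρ₊ |h₊|² + ρ₋ |h₋|² > (ρ₊ ρ₋ / (ρ₊ + ρ₋)) |w|²`. -/
theorem stmt15 (ρp ρm : ℝ) (hρp : 0 < ρp) (hρm : 0 < ρm)
    (hplus hminus w : EuclideanSpace ℝ (Fin 3))
    (hcross : cross3 hplus hminus ≠ 0)
    (hwspan : w ∈ Submodule.span ℝ {hplus, hminus})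
    (hsyro : (ρp + ρm) * ‖cross3 hplus hminus‖ ^ 2 >
        ρp * ‖cross3 hplus w‖ ^ 2 + ρm * ‖cross3 hminus w‖ ^ 2) :
    ρp * ‖hplus‖ ^ 2 + ρm * ‖hminus‖ ^ 2 > ρp * ρm / (ρp + ρm) * ‖w‖ ^ 2 := by
  obtain ⟨α, β, rfl⟩ := Submodule.mem_span_pair.mp hwspan
  have hweights : ρm * α ^ 2 + ρp * β ^ 2 < ρp + ρm := by
    rw [norm_cross3_left_smul_add_smul, norm_cross3_right_smul_add_smul] at hsyro
    simp only [mul_pow, sq_abs] at hsyro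
    refine lt_of_mul_lt_mul_right ?_ (sq_nonneg ‖cross3 hplus hminus‖)
    linarith
  have hplus_ne : hplus ≠ 0 := by
    rintro rfl
    simp at hcross
  have hS : 0 < ρp * ‖hplus‖ ^ 2 + ρm * ‖hminus‖ ^ 2 := by positivity
  have hbound := mul_norm_smul_add_smul_sq_le hρp.le hρm.le hplus hminus α β
  rw [gt_iff_lt, div_mul_eq_mul_div, div_lt_iff₀ (by positivity)]
  exact (hbound.trans_lt (mul_lt_mul_of_pos_right hweights hS)).trans_eq (mul_comm _ _)
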